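/- Let κ ∈ (0,1), α > 1/κ, and F(t) = 4α(t⁴ - (κ + 1/κ)t² + 1). Then ∫_{1/√κ}^{√α} dt/√(F(t)) = (1/2)√(κ/α) · (K(κ) - F(arcsin(1/√(ακ)), κ)), where F(φ,κ) = ∫₀^φ dθ/√(1 - κ² sin²θ) is the incomplete elliptic integral of the first kind. -/
import Mathlib

open Real MeasureTheory Set intervalIntegral

/-- The incomplete elliptic integral of the first kind `F(φ,k)`. -/
noncomputable def ellF (φ k : ℝ) : ℝ :=
  ∫ θ in (0:ℝ)..φ, 1 / Real.sqrt (1 - k ^ 2 * Real.sin θ ^ 2)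


private lemma aux_pt (κ α sa sk s c w : ℝ) (hκ0 : 0 < κ)
    (hsk0 : 0 < sk) (hsa0 : 0 < sa) (hsk2 : sk ^ 2 = κ) (hsa2 : sa ^ 2 = α)
    (hs0 : 0 < s) (hc : 0 < c) (hcs : c ^ 2 = 1 - s ^ 2)
    (hw : 0 < w) (hw2 : w ^ 2 = 1 - κ ^ 2 * s ^ 2) :
    |(-(sk * c) / (sk * s) ^ 2)| *
      (1 / Real.sqrt (4 * α *
        (((sk * s)⁻¹) ^ 4 - (κ + 1 / κ) * ((sk * s)⁻¹) ^ 2 + 1)))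
      = (1 / 2) * (sk / sa) * (1 / w) := by
  have hκ : κ ≠ 0 := ne_of_gt hκ0
  have h1 : sk ≠ 0 := ne_of_gt hsk0
  have h2 : s ≠ 0 := ne_of_gt hs0
  have h3 : c ≠ 0 := ne_of_gt hc
  have h4 : w ≠ 0 := ne_of_gt hw
  have h5 : sa ≠ 0 := ne_of_gt hsa0
  have ht2 : ((sk * s)⁻¹) ^ 2 = (κ * s ^ 2)⁻¹ := by
    rw [← hsk2, inv_pow, mul_pow]
  have hP : ((sk * s)⁻¹) ^ 4 - (κ + 1 / κ) * ((sk * s)⁻¹) ^ 2 + 1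
      = (1 - s ^ 2) * (1 - κ ^ 2 * s ^ 2) / (κ * s ^ 2) ^ 2 := by
    have h4' : ((sk * s)⁻¹) ^ 4 = (((sk * s)⁻¹) ^ 2) ^ 2 := by ring
    rw [h4', ht2]
    field_simp
    ring
  have hkey : 4 * α * (((sk * s)⁻¹) ^ 4 - (κ + 1 / κ) * ((sk * s)⁻¹) ^ 2 + 1)
      = (2 * sa * c * w / (κ * s ^ 2)) ^ 2 := by
    rw [hP, ← hsa2, ← hw2, ← hcs, div_pow, ← mul_div_assoc]
    congr 1
    ring
  have hpos : (0 : ℝ) ≤ 2 * sa * c * w / (κ * s ^ 2) := by positivity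
  rw [hkey, Real.sqrt_sq hpos]
  rw [abs_div, abs_neg, abs_of_nonneg (by positivity : (0:ℝ) ≤ sk * c),
    abs_of_nonneg (by positivity : (0:ℝ) ≤ (sk * s) ^ 2)]
  rw [← hsk2]
  field_simp


private lemma aux_cont (κ : ℝ) (hκ0 : 0 < κ) (hκ1 : κ < 1) :
    Continuous (fun θ : ℝ => 1 / Real.sqrt (1 - κ ^ 2 * Real.sin θ ^ 2)) := by
  apply continuous_const.div
  · exact Real.continuous_sqrt.comp
      (continuous_const.sub (continuous_const.mul (Real.continuous_sin.pow 2)))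
  · intro θ
    have h1 : κ ^ 2 * Real.sin θ ^ 2 < 1 := by
      nlinarith [Real.sin_sq_le_one θ, sq_nonneg (Real.sin θ), sq_nonneg κ,
        Real.neg_one_le_sin θ, Real.sin_le_one θ]
    exact ne_of_gt (Real.sqrt_pos.mpr (by linarith))

/-- The complete elliptic integral of the first kind `K(k)`. -/
noncomputable def ellK (k : ℝ) : ℝ := ellF (Real.pi / 2) k

/-- For `κ ∈ (0,1)`, `α > 1/κ` and `F(t) = 4α(t⁴ - (κ+1/κ)t² + 1)`, one has
`∫_{1/√κ}^{√α} dt/√(F(t)) = (1/2)√(κ/α)(K(κ) - F(arcsin(1/√(ακ)), κ))`. -/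
theorem stmt_8 (κ α : ℝ) (hκ0 : 0 < κ) (hκ1 : κ < 1) (hα : 1 / κ < α) :
    (∫ t in (1 / Real.sqrt κ)..(Real.sqrt α),
        1 / Real.sqrt (4 * α * (t ^ 4 - (κ + 1 / κ) * t ^ 2 + 1))) =
      (1 / 2) * Real.sqrt (κ / α) *
        (ellK κ - ellF (Real.arcsin (1 / Real.sqrt (α * κ))) κ) := by
  have hκα : 1 < α * κ := by
    have := (div_lt_iff₀ hκ0).mp hα
    linarith [this]
  have hα0 : 0 < α := by nlinarith
  set sk := Real.sqrt κ with hsk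
  set sa := Real.sqrt α with hsa
  have hsk0 : 0 < sk := Real.sqrt_pos.mpr hκ0
  have hsa0 : 0 < sa := Real.sqrt_pos.mpr hα0
  have hsk2 : sk ^ 2 = κ := Real.sq_sqrt hκ0.le
  have hsa2 : sa ^ 2 = α := Real.sq_sqrt hα0.le
  have hsask : Real.sqrt (α * κ) = sa * sk := Real.sqrt_mul hα0.le κ
  have hsask1 : 1 < sa * sk := by
    rw [← hsask]; exact (Real.lt_sqrt (by norm_num)).mpr (by simpa using hκα)
  set u : ℝ := 1 / Real.sqrt (α * κ) with hu
  have huval : u = (sa * sk)⁻¹ := by rw [hu, hsask, one_div]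
  have hu0 : 0 < u := by positivity
  have hu1 : u < 1 := by
    rw [huval, inv_lt_one_iff₀]; right; exact hsask1
  set φ0 : ℝ := Real.arcsin u with hφ0
  have hφ0pos : 0 < φ0 := Real.arcsin_pos.mpr hu0
  have hφ0lt : φ0 < π / 2 := (Real.arcsin_lt_pi_div_two).mpr hu1
  have hsinφ0 : Real.sin φ0 = u := Real.sin_arcsin (by linarith) hu1.le
  set b : ℝ := 1 / sk with hb
  have hba : b < sa := by
    rw [hb, div_lt_iff₀ hsk0]; nlinarith
  have hb0 : 0 < b := by positivity
  -- the substitution map and its derivative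
  set f : ℝ → ℝ := fun θ => (sk * Real.sin θ)⁻¹ with hf
  set f' : ℝ → ℝ := fun θ => -(sk * Real.cos θ) / (sk * Real.sin θ) ^ 2 with hf'
  set g : ℝ → ℝ := fun t => 1 / Real.sqrt (4 * α * (t ^ 4 - (κ + 1 / κ) * t ^ 2 + 1)) with hg
  set S : Set ℝ := Ioo φ0 (π / 2) with hS
  -- basic facts on S
  have hmem : ∀ θ ∈ S, 0 < Real.sin θ ∧ Real.sin θ < 1 ∧ u < Real.sin θ ∧ 0 < Real.cos θ := by
    intro θ hθ
    obtain ⟨h1, h2⟩ := hθ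
    have hθ0 : 0 < θ := lt_trans hφ0pos h1
    have hs0 : 0 < Real.sin θ := Real.sin_pos_of_pos_of_lt_pi hθ0 (by linarith [Real.pi_pos])
    have hmono := Real.strictMonoOn_sin
    have hs1 : Real.sin θ < 1 := by
      have := hmono (a := θ) (b := π / 2) ⟨by linarith, by linarith⟩
        ⟨by linarith [Real.pi_pos], le_refl _⟩ h2
      simpa using this
    have hsu : u < Real.sin θ := by
      have := hmono (a := φ0) (b := θ)
        ⟨by linarith [Real.neg_pi_div_two_le_arcsin u], by linarith⟩
        ⟨by linarith, by linarith⟩ h1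
      rwa [hsinφ0] at this
    have hc : 0 < Real.cos θ := Real.cos_pos_of_mem_Ioo ⟨by linarith, h2⟩
    exact ⟨hs0, hs1, hsu, hc⟩
  have hfφ0 : f φ0 = sa := by
    rw [hf]; simp only [hsinφ0, huval]
    rw [mul_inv, inv_inv]
    field_simp
  have hfπ2 : f (π / 2) = b := by
    rw [hf]; simp [hb, one_div]
  -- image of S under f
  have himage : f '' S = Ioo b sa := by
    apply Subset.antisymm
    · rintro _ ⟨θ, hθ, rfl⟩
      obtain ⟨hs0, hs1, hsu, hc⟩ := hmem θ hθ
      constructor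
      · rw [hb, one_div]
        exact inv_strictAnti₀ (by positivity) (by nlinarith)
      · have h1 : sa⁻¹ < sk * Real.sin θ := by
          rw [huval] at hsu
          rw [mul_inv] at hsu
          have : sa⁻¹ * sk⁻¹ * sk < Real.sin θ * sk := by
            apply mul_lt_mul_of_pos_right hsu hsk0
          rw [inv_mul_cancel_right₀ (ne_of_gt hsk0)] at this
          calc sa⁻¹ < Real.sin θ * sk := this
          _ = sk * Real.sin θ := mul_comm _ _
        calc f θ = (sk * Real.sin θ)⁻¹ := rfl
        _ < (sa⁻¹)⁻¹ := inv_strictAnti₀ (by positivity) h1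
        _ = sa := inv_inv sa
    · intro y hy
      have hcont : ContinuousOn f (Icc φ0 (π / 2)) := by
        apply ContinuousOn.inv₀
        · exact (continuous_const.mul Real.continuous_sin).continuousOn
        · intro θ hθ
          have hθ0 : 0 < θ := lt_of_lt_of_le hφ0pos hθ.1
          have : 0 < Real.sin θ :=
            Real.sin_pos_of_pos_of_lt_pi hθ0 (lt_of_le_of_lt hθ.2 (by linarith [Real.pi_pos]))
          positivity
      have := intermediate_value_Ioo' (le_of_lt hφ0lt) hcont
      rw [hfφ0, hfπ2] at this
      exact this hy
  -- injectivity
  have hinj : InjOn f S := by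
    intro x hx y hy hxy
    obtain ⟨hx0, hx1, _, _⟩ := hmem x hx
    obtain ⟨hy0, hy1, _, _⟩ := hmem y hy
    have h1 : sk * Real.sin x = sk * Real.sin y := by
      have := congrArg (·⁻¹) hxy
      simpa [hf, inv_inv] using this
    have h2 : Real.sin x = Real.sin y := by
      exact mul_left_cancel₀ (ne_of_gt hsk0) h1
    exact Real.injOn_sin ⟨by linarith [hx.1, hφ0pos, Real.pi_pos], hx.2.le⟩
      ⟨by linarith [hy.1, hφ0pos, Real.pi_pos], hy.2.le⟩ h2
  -- derivative
  have hderiv : ∀ θ ∈ S, HasDerivWithinAt f (f' θ) S θ := by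
    intro θ hθ
    obtain ⟨hs0, _, _, _⟩ := hmem θ hθ
    have h1 : HasDerivAt (fun θ => sk * Real.sin θ) (sk * Real.cos θ) θ :=
      (Real.hasDerivAt_sin θ).const_mul sk
    exact (h1.inv (by positivity)).hasDerivWithinAt
  -- pointwise identity
  have hpt : ∀ θ ∈ S, |f' θ| * g (f θ)
      = (1 / 2) * Real.sqrt (κ / α) * (1 / Real.sqrt (1 - κ ^ 2 * Real.sin θ ^ 2)) := by
    intro θ hθ
    obtain ⟨hs0, hs1, hsu, hc⟩ := hmem θ hθ
    have hcs : Real.cos θ ^ 2 = 1 - Real.sin θ ^ 2 := by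
      have := Real.sin_sq_add_cos_sq θ; linarith
    have hw0 : 0 < 1 - κ ^ 2 * Real.sin θ ^ 2 := by nlinarith
    have hw : 0 < Real.sqrt (1 - κ ^ 2 * Real.sin θ ^ 2) := Real.sqrt_pos.mpr hw0
    have hw2 : Real.sqrt (1 - κ ^ 2 * Real.sin θ ^ 2) ^ 2 = 1 - κ ^ 2 * Real.sin θ ^ 2 :=
      Real.sq_sqrt hw0.le
    have hsqdiv : Real.sqrt (κ / α) = sk / sa := by
      rw [hsk, hsa]; exact Real.sqrt_div hκ0.le α
    rw [hsqdiv]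
    exact aux_pt κ α sa sk (Real.sin θ) (Real.cos θ)
      (Real.sqrt (1 - κ ^ 2 * Real.sin θ ^ 2)) hκ0 hsk0 hsa0 hsk2 hsa2
      hs0 hc hcs hw hw2
  -- integrability of the elliptic integrand
  have hell_cont := aux_cont κ hκ0 hκ1
  -- now the computation
  have hchange := MeasureTheory.integral_image_eq_integral_abs_deriv_smul
    measurableSet_Ioo hderiv hinj g
  rw [himage] at hchange
  have step1 : (∫ t in (1 / Real.sqrt κ)..(Real.sqrt α), g t) = ∫ t in Ioo b sa, g t := by
    rw [intervalIntegral.integral_of_le hba.le,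
      MeasureTheory.integral_Ioc_eq_integral_Ioo]
  have step2 : (∫ θ in S, |f' θ| • g (f θ))
      = ∫ θ in S, (1 / 2) * Real.sqrt (κ / α) * (1 / Real.sqrt (1 - κ ^ 2 * Real.sin θ ^ 2)) := by
    apply MeasureTheory.setIntegral_congr_fun measurableSet_Ioo
    intro θ hθ
    simpa [smul_eq_mul] using hpt θ hθ
  have step3 : (∫ θ in S, (1 / 2) * Real.sqrt (κ / α) * (1 / Real.sqrt (1 - κ ^ 2 * Real.sin θ ^ 2)))
      = (1 / 2) * Real.sqrt (κ / α) * (ellK κ - ellF φ0 κ) := by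
    rw [MeasureTheory.integral_const_mul]
    congr 1
    have hsub : ellK κ - ellF φ0 κ
        = ∫ θ in φ0..(π / 2), 1 / Real.sqrt (1 - κ ^ 2 * Real.sin θ ^ 2) := by
      rw [ellK, ellF, ellF]
      exact intervalIntegral.integral_interval_sub_left
        (hell_cont.intervalIntegrable _ _) (hell_cont.intervalIntegrable _ _)
    rw [hsub, intervalIntegral.integral_of_le hφ0lt.le,
      MeasureTheory.integral_Ioc_eq_integral_Ioo]
  calc (∫ t in (1 / Real.sqrt κ)..(Real.sqrt α), g t)
      = ∫ t in Ioo b sa, g t := step1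
    _ = ∫ θ in S, |f' θ| • g (f θ) := hchange
    _ = (1 / 2) * Real.sqrt (κ / α) * (ellK κ - ellF φ0 κ) := by rw [step2, step3]
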